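/- arXiv:math/0403453 — 2 statements merged into one kernel-verified Lean document; each statement's English description precedes it below -/
import Mathlib

section
/- Let (X,𝓑,μ,T) be any (not necessarily invertible) measure preserving probability system and A ∈ 𝓑. Then there exists an invertible strongly stationary system (X̃,𝓑̃,μ̃,T̃) — which may be taken to be the shift on {0,1}^ℤ with a strongly stationary measure — and a set B̃ ∈ 𝓑̃ such that μ(A) = μ̃(B̃) and for every k ∈ ℕ, sup_{n∈ℕ} μ(⋂_{i=0}^{k} T^{-in}A) ≥ sup_{n∈ℕ} μ̃(⋂_{i=0}^{k} T̃^{-in}B̃). -/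
open MeasureTheory Filter

noncomputable section

/-- The shift `S` on the sequence space `Λ^ℤ`, `(S x) k = x (k+1)`. -/
def shiftMap {Λ : Type*} (x : ℤ → Λ) : ℤ → Λ := fun k => x (k + 1)

/-- The dilation map `τ_n`, `(τ_n x) i = x (n * i)`. -/
def dilMap {Λ : Type*} (n : ℕ) (x : ℤ → Λ) : ℤ → Λ := fun i => x ((n : ℤ) * i)

/-- A measure on the sequence space `Λ^ℤ` is *strongly stationary* if it is invariant
under the shift `S` and under every dilation `τ_n`, `n ≥ 1`. -/
def IsStronglyStationary {Λ : Type*} [MeasurableSpace Λ] (ν : Measure (ℤ → Λ)) : Prop :=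
  MeasurePreserving shiftMap ν ν ∧ ∀ n : ℕ, 0 < n → MeasurePreserving (dilMap n) ν ν

/-!
Code a point `x` by its itinerary `i ↦ 1_A(T^(n i + l) x)` along an arithmetic progression.
On a cylinder set the law of this coding stops depending on the offset `l` once `l` is large,
because `T` preserves `μ`; since the shift adds `n` to `l`, it eventually preserves these laws,
while the dilation `τ_m` replaces `n` by `n m`. Averaging the laws over the divisors `n` of
`N!^N`, a multiplicative Følner sequence, and taking a weak limit along an ultrafilter yields a
measure `ν` invariant under `S` and every `τ_m`. For `B = {y | y 0 = 1}`, `ν(⋂_{i ≤ k} S^{-id} B)`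
is a limit of averages of the numbers `μ(⋂_{i ≤ k} T^{-ind} A)`.
-/

open Topology Finset
open scoped ENNReal Nat

section ShiftSpace

variable {Λ : Type*}

lemma dilMap_one : dilMap 1 = (id : (ℤ → Λ) → (ℤ → Λ)) := by
  funext x i
  simp [dilMap]

lemma dilMap_mul (a b : ℕ) : dilMap (a * b) = (dilMap b ∘ dilMap a : (ℤ → Λ) → (ℤ → Λ)) := by
  funext x i
  simp [dilMap, mul_assoc]

lemma IsStronglyStationary.of_prime [MeasurableSpace Λ] {ν : Measure (ℤ → Λ)}
    (hS : MeasurePreserving shiftMap ν ν)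
    (hdil : ∀ p : ℕ, p.Prime → MeasurePreserving (dilMap p) ν ν) : IsStronglyStationary ν := by
  refine ⟨hS, fun n => ?_⟩
  induction n using induction_on_primes with
  | zero => exact fun h => absurd h (lt_irrefl 0)
  | one => exact fun _ => dilMap_one (Λ := Λ) ▸ .id ν
  | prime_mul p a hp ha =>
    intro hpa
    rw [dilMap_mul]
    exact (ha (Nat.pos_of_mul_pos_left hpa)).comp (hdil p hp)

variable [TopologicalSpace Λ]

lemma continuous_shiftMap : Continuous (shiftMap : (ℤ → Λ) → (ℤ → Λ)) :=
  continuous_pi fun k => continuous_apply (k + 1)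

lemma continuous_dilMap (n : ℕ) : Continuous (dilMap n : (ℤ → Λ) → (ℤ → Λ)) :=
  continuous_pi fun _ => continuous_apply _

lemma IsClopen.biInter_shiftMap_iterate_preimage {B : Set (ℤ → Λ)} (hB : IsClopen B)
    (k d : ℕ) : IsClopen (⋂ i ∈ range (k + 1), shiftMap^[i * d] ⁻¹' B) :=
  isClopen_biInter_finset fun _ _ => hB.preimage (continuous_shiftMap.iterate _)

end ShiftSpace

lemma isClopen_of_mem_measurableCylinders {ι : Type*} {C : Set (ι → Bool)}
    (hC : C ∈ measurableCylinders fun _ : ι => Bool) : IsClopen C := by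
  obtain ⟨s, S, -, rfl⟩ := (mem_measurableCylinders C).1 hC
  exact (isClopen_discrete S).preimage (Finset.continuous_restrict s)

namespace MeasureTheory.ProbabilityMeasure

variable {Ω κ : Type*} [MeasurableSpace Ω] [TopologicalSpace Ω] {L : Filter κ}

lemma tendsto_measure_of_isClopen_of_tendsto' [OpensMeasurableSpace Ω] [HasOuterApproxClosed Ω]
    {νs : κ → ProbabilityMeasure Ω} {ν : ProbabilityMeasure Ω} (hν : Tendsto νs L (𝓝 ν))
    {C : Set Ω} (hC : IsClopen C) :
    Tendsto (fun k => (νs k : Measure Ω) C) L (𝓝 ((ν : Measure Ω) C)) :=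
  tendsto_measure_of_null_frontier_of_tendsto' hν (by simp [hC.frontier_eq])

lemma measurePreserving_of_tendsto {ι : Type*} [Countable ι] [L.NeBot]
    {νs : κ → ProbabilityMeasure (ι → Bool)} {ν : ProbabilityMeasure (ι → Bool)}
    (hν : Tendsto νs L (𝓝 ν)) {f : (ι → Bool) → (ι → Bool)} (hf : Continuous f)
    (h : ∀ C ∈ measurableCylinders fun _ : ι => Bool,
      Tendsto (fun k => (νs k : Measure (ι → Bool)).real (f ⁻¹' C)
        - (νs k : Measure (ι → Bool)).real C) L (𝓝 0)) :
    MeasurePreserving f ν ν := by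
  refine ⟨hf.measurable, ext_of_generate_finite _ generateFrom_measurableCylinders.symm
    isPiSystem_measurableCylinders (fun C hC => ?_)
    (by simp [Measure.map_apply hf.measurable MeasurableSet.univ])⟩
  have hC' := isClopen_of_mem_measurableCylinders hC
  have hlim : ∀ {E : Set (ι → Bool)}, IsClopen E → Tendsto
      (fun k => (νs k : Measure (ι → Bool)).real E) L (𝓝 ((ν : Measure (ι → Bool)).real E)) :=
    fun hE => by
      simp only [measureReal_eq_coe_coeFn]
      exact (NNReal.continuous_coe.tendsto _).comp (tendsto_measure_of_isClopen_of_tendsto hν hE)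
  have heq : (ν : Measure (ι → Bool)).real (f ⁻¹' C) = (ν : Measure (ι → Bool)).real C := by
    rw [← sub_eq_zero]
    exact tendsto_nhds_unique ((hlim (hC'.preimage hf)).sub (hlim hC')) (h C hC)
  rw [Measure.map_apply hf.measurable hC'.isOpen.measurableSet]
  exact (measureReal_eq_measureReal_iff (measure_ne_top _ _) (measure_ne_top _ _)).1 heq

end MeasureTheory.ProbabilityMeasure

section Coding

variable {X : Type*}

-- Negative times `n i + l` are clamped to `0`; on a fixed window this is invisible once `l` is
-- large, which is what the offsets in `codingAverage` ensure.
open scoped Classical in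
def coding (T : X → X) (A : Set X) (n l : ℕ) (x : X) : ℤ → Bool :=
  fun i => decide (T^[(n * i + l).toNat] x ∈ A)

variable {T : X → X} {A : Set X}

lemma shiftMap_coding (n l : ℕ) (x : X) :
    shiftMap (coding T A n l x) = coding T A n (l + n) x := by
  funext i
  simp only [shiftMap, coding]
  congr 4
  push_cast
  ring

lemma shiftMap_iterate_coding (n l j : ℕ) (x : X) :
    shiftMap^[j] (coding T A n l x) = coding T A n (l + j * n) x := by
  induction j generalizing l with
  | zero => simp
  | succ j ih =>
    rw [Function.iterate_succ_apply', ih, shiftMap_coding, add_one_mul, add_assoc]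

lemma dilMap_coding (n m l : ℕ) (x : X) :
    dilMap m (coding T A n l x) = coding T A (n * m) l x := by
  funext i
  simp only [dilMap, coding]
  congr 4
  push_cast
  ring

lemma restrict_coding_succ {n l : ℕ} {s : Finset ℤ} (hs : ∀ i ∈ s, 0 ≤ (n : ℤ) * i + l)
    (x : X) : s.restrict (coding T A n (l + 1) x) = s.restrict (coding T A n l (T x)) := by
  funext ⟨i, hi⟩
  have hi' := hs i hi
  simp only [Finset.restrict, coding, ← Function.iterate_succ_apply]
  congr 4
  omega

lemma coding_succ_preimage_cylinder {n l : ℕ} {s : Finset ℤ}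
    (hs : ∀ i ∈ s, 0 ≤ (n : ℤ) * i + l) (S : Set (s → Bool)) :
    coding T A n (l + 1) ⁻¹' cylinder s S = T ⁻¹' (coding T A n l ⁻¹' cylinder s S) := by
  ext x
  simp only [cylinder, Set.mem_preimage, restrict_coding_succ hs]

lemma coding_preimage_biInter_shiftMap_iterate (n d l k : ℕ) :
    coding T A n l ⁻¹' (⋂ i ∈ range (k + 1), shiftMap^[i * d] ⁻¹' {y | y 0 = true})
      = T^[l] ⁻¹' ⋂ i ∈ range (k + 1), T^[i * (n * d)] ⁻¹' A := by
  ext x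
  simp only [Set.preimage_iInter₂, Set.mem_iInter₂, Set.mem_preimage, Set.mem_ofPred_eq,
    shiftMap_iterate_coding, coding, decide_eq_true_eq, ← Function.iterate_add_apply]
  refine forall₂_congr fun i _ => ?_
  congr! 3
  rw [mul_zero, zero_add, Int.toNat_natCast]
  ring

variable [MeasurableSpace X] {μ : Measure X}

lemma measurable_coding (hT : Measurable T) (hA : MeasurableSet A) (n l : ℕ) :
    Measurable (coding T A n l) :=
  measurable_pi_lambda _ fun _ => measurable_to_bool <| by
    simpa [coding, Set.preimage] using (hT.iterate _) hA

lemma measure_coding_add_preimage_cylinder (hT : MeasurePreserving T μ μ) (hA : MeasurableSet A)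
    {n l : ℕ} {s : Finset ℤ} (hs : ∀ i ∈ s, 0 ≤ (n : ℤ) * i + l) {S : Set (s → Bool)}
    (hS : MeasurableSet S) (j : ℕ) :
    μ (coding T A n (l + j) ⁻¹' cylinder s S) = μ (coding T A n l ⁻¹' cylinder s S) := by
  induction j with
  | zero => rfl
  | succ j ih =>
    have hs' : ∀ i ∈ s, 0 ≤ (n : ℤ) * i + ↑(l + j) := fun i hi => by
      have := hs i hi
      push_cast
      omega
    rw [← add_assoc, coding_succ_preimage_cylinder hs', hT.measure_preimage
      ((measurable_coding hT.measurable hA n _) (hS.cylinder s)).nullMeasurableSet, ih]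

lemma measure_coding_preimage_shiftMap_cylinder (hT : MeasurePreserving T μ μ)
    (hA : MeasurableSet A) {n l : ℕ} {s : Finset ℤ} (hs : ∀ i ∈ s, 0 ≤ (n : ℤ) * i + l)
    {S : Set (s → Bool)} (hS : MeasurableSet S) :
    μ (coding T A n l ⁻¹' (shiftMap ⁻¹' cylinder s S)) = μ (coding T A n l ⁻¹' cylinder s S) := by
  rw [← measure_coding_add_preimage_cylinder hT hA hs hS n]
  congr 1
  ext x
  simp only [Set.mem_preimage, shiftMap_coding]

end Coding

section Folner

lemma abs_sum_sub_sum_le_card_sdiff {α : Type*} [DecidableEq α] {s t : Finset α}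
    (hst : #s = #t) {g : α → ℝ} (hg0 : ∀ a, 0 ≤ g a) (hg1 : ∀ a, g a ≤ 1) :
    |∑ a ∈ s, g a - ∑ a ∈ t, g a| ≤ #(s \ t) := by
  have hle : ∀ u : Finset α, ∑ a ∈ u, g a ≤ #u := fun u => by
    simpa using sum_le_card_nsmul u g 1 fun a _ => hg1 a
  rw [← sum_sdiff_sub_sum_sdiff]
  refine abs_sub_le_of_nonneg_of_le (sum_nonneg fun a _ => hg0 a) (hle _)
    (sum_nonneg fun a _ => hg0 a) ?_
  rw [card_sdiff_comm hst]
  exact hle _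

lemma card_divisors_sdiff_div_prime_mul {Q p : ℕ} (hp : p.Prime) (hQ : Q ≠ 0) (hpQ : p ∣ Q) :
    #(Q.divisors \ (Q / p).divisors) * (Q.factorization p + 1) = #Q.divisors := by
  set f := Q.factorization p
  set R := Q / p ^ f
  have hcard : ∀ k, #(p ^ k * R).divisors = (k + 1) * #R.divisors := fun k => by
    rw [((Nat.coprime_ordCompl hp hQ).pow_left k).card_divisors_mul, Nat.divisors_prime_pow hp,
      card_map, card_range]
  obtain ⟨e, he⟩ : ∃ e, f = e + 1 := Nat.exists_eq_succ_of_ne_zero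
    (hp.factorization_pos_of_dvd hQ hpQ).ne'
  have hQ' : Q = p * (p ^ e * R) := by
    rw [← mul_assoc, ← pow_succ', ← he]
    exact (Nat.ordProj_mul_ordCompl_eq_self Q p).symm
  have hQp : Q / p = p ^ e * R := by
    rw [hQ', Nat.mul_div_cancel_left _ hp.pos]
  have hcardQ : #Q.divisors = (e + 1 + 1) * #R.divisors := by
    conv_lhs => rw [hQ', ← mul_assoc, ← pow_succ']
    exact hcard _
  rw [card_sdiff_of_subset (Nat.divisors_subset_of_dvd hQ (Nat.div_dvd_of_dvd hpQ)), hQp, hcard,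
    hcardQ, he, add_mul (e + 1), one_mul, Nat.add_sub_cancel_left]
  ring

/-- Since `v_p(N!^N) ≥ N` for `p ≤ N`, this makes the divisors of `N!^N` a multiplicative
Følner sequence. -/
lemma abs_sum_divisors_mul_prime_sub_le {Q p : ℕ} (hp : p.Prime) (hQ : Q ≠ 0) (hpQ : p ∣ Q)
    {g : ℕ → ℝ} (hg0 : ∀ n, 0 ≤ g n) (hg1 : ∀ n, g n ≤ 1) :
    |∑ n ∈ Q.divisors, g (n * p) - ∑ n ∈ Q.divisors, g n| * (Q.factorization p + 1)
      ≤ #Q.divisors := by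
  have hinj : Function.Injective (· * p) := fun a b h => Nat.eq_of_mul_eq_mul_right hp.pos h
  have hsub : Q.divisors.image (· * p) \ Q.divisors
      ⊆ (Q.divisors \ (Q / p).divisors).image (· * p) := by
    intro d hd
    obtain ⟨hdQ, hdnot⟩ := mem_sdiff.1 hd
    obtain ⟨n, hn, rfl⟩ := mem_image.1 hdQ
    refine mem_image_of_mem _ (mem_sdiff.2 ⟨hn, fun hn' => hdnot ?_⟩)
    rw [Nat.mem_divisors, mul_comm] at *
    exact ⟨Nat.mul_dvd_of_dvd_div hpQ hn'.1, hQ⟩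
  rw [← sum_image fun a _ b _ h => hinj h]
  calc |∑ d ∈ Q.divisors.image (· * p), g d - ∑ n ∈ Q.divisors, g n|
        * (Q.factorization p + 1)
      ≤ #(Q.divisors.image (· * p) \ Q.divisors) * (Q.factorization p + 1) := by
        gcongr
        exact abs_sum_sub_sum_le_card_sdiff (card_image_of_injective _ hinj) hg0 hg1
    _ ≤ #(Q.divisors \ (Q / p).divisors) * (Q.factorization p + 1) := by
        refine mul_le_mul_of_nonneg_right ?_ (by positivity)
        exact_mod_cast (card_le_card hsub).trans card_image_le
    _ = #Q.divisors := by exact_mod_cast card_divisors_sdiff_div_prime_mul hp hQ hpQ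

lemma le_factorization_factorial_pow {N p : ℕ} (hp : p.Prime) (hpN : p ≤ N) :
    N ≤ (N ! ^ N).factorization p := by
  rw [Nat.factorization_pow, Finsupp.smul_apply, smul_eq_mul]
  exact Nat.le_mul_of_pos_right N
    (hp.factorization_pos_of_dvd (Nat.factorial_ne_zero N) (Nat.dvd_factorial hp.pos hpN))

lemma nonempty_divisors_factorial_pow (N : ℕ) : (N ! ^ N).divisors.Nonempty :=
  Nat.nonempty_divisors.2 (pow_ne_zero _ (Nat.factorial_ne_zero N))

end Folner

section UniformMixture

variable {Ω ι : Type*} [MeasurableSpace Ω]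

def uniformMixture (D : Finset ι) (ρ : ι → Measure Ω) : Measure Ω :=
  (#D : ℝ≥0∞)⁻¹ • ∑ i ∈ D, ρ i

variable {D : Finset ι} {ρ : ι → Measure Ω} {s : Set Ω}

lemma uniformMixture_apply : uniformMixture D ρ s = (#D : ℝ≥0∞)⁻¹ * ∑ i ∈ D, ρ i s := by
  simp [uniformMixture, Measure.finsetSum_apply]

lemma uniformMixture_apply_le (hD : D.Nonempty) {c : ℝ≥0∞} (h : ∀ i ∈ D, ρ i s ≤ c) :
    uniformMixture D ρ s ≤ c := by
  have hD0 : (#D : ℝ≥0∞) ≠ 0 := by simpa using hD.ne_empty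
  calc uniformMixture D ρ s ≤ (#D : ℝ≥0∞)⁻¹ * (#D * c) := by
        rw [uniformMixture_apply]
        gcongr
        simpa using sum_le_card_nsmul D (ρ · s) c h
    _ = c := by rw [← mul_assoc, ENNReal.inv_mul_cancel hD0 (ENNReal.natCast_ne_top _), one_mul]

lemma uniformMixture_apply_of_forall_eq (hD : D.Nonempty) {c : ℝ≥0∞} (h : ∀ i ∈ D, ρ i s = c) :
    uniformMixture D ρ s = c := by
  have hD0 : (#D : ℝ≥0∞) ≠ 0 := by simpa using hD.ne_empty
  rw [uniformMixture_apply, sum_congr rfl h, sum_const, nsmul_eq_mul, ← mul_assoc,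
    ENNReal.inv_mul_cancel hD0 (ENNReal.natCast_ne_top _), one_mul]

lemma isProbabilityMeasure_uniformMixture (hD : D.Nonempty)
    (hρ : ∀ i ∈ D, IsProbabilityMeasure (ρ i)) : IsProbabilityMeasure (uniformMixture D ρ) :=
  ⟨uniformMixture_apply_of_forall_eq hD fun i hi => (hρ i hi).measure_univ⟩

lemma measureReal_uniformMixture [∀ i, IsFiniteMeasure (ρ i)] :
    (uniformMixture D ρ).real s = (#D : ℝ)⁻¹ * ∑ i ∈ D, (ρ i).real s := by
  simp [measureReal_def, uniformMixture_apply, ENNReal.toReal_mul, ENNReal.toReal_sum,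
    measure_ne_top]

end UniformMixture

section CodingAverage

variable {X : Type*} [MeasurableSpace X] {μ : Measure X} {T : X → X} {A : Set X}

variable (μ T A) in
/-- The offset `N · N!^N` is at least `n N` for every divisor `n` of `N!^N`, so a cylinder with
window in `[-N, N]` only sees nonnegative times of `coding`. -/
def codingAverage (N : ℕ) : Measure (ℤ → Bool) :=
  uniformMixture (N ! ^ N).divisors fun n => μ.map (coding T A n (N * N ! ^ N))

lemma isProbabilityMeasure_codingAverage [IsProbabilityMeasure μ] (hT : Measurable T)
    (hA : MeasurableSet A) (N : ℕ) : IsProbabilityMeasure (codingAverage μ T A N) :=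
  isProbabilityMeasure_uniformMixture (nonempty_divisors_factorial_pow N) fun _ _ =>
    Measure.isProbabilityMeasure_map (measurable_coding hT hA _ _).aemeasurable

lemma isClopen_setOf_apply_zero_eq_true : IsClopen {y : ℤ → Bool | y 0 = true} :=
  (isClopen_discrete {true}).preimage (continuous_apply 0)

lemma codingAverage_apply_setOf_zero (hT : MeasurePreserving T μ μ) (hA : MeasurableSet A)
    (N : ℕ) : codingAverage μ T A N {y | y 0 = true} = μ A := by
  refine uniformMixture_apply_of_forall_eq (nonempty_divisors_factorial_pow N) fun n _ => ?_
  have h := coding_preimage_biInter_shiftMap_iterate (T := T) (A := A) n 1 (N * N ! ^ N) 0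
  simp only [zero_add, range_one, mem_singleton, Set.iInter_iInter_eq_left, zero_mul,
    Function.iterate_zero, Set.preimage_id] at h
  rw [Measure.map_apply (measurable_coding hT.measurable hA _ _)
    isClopen_setOf_apply_zero_eq_true.isOpen.measurableSet, h,
    (hT.iterate _).measure_preimage hA.nullMeasurableSet]

lemma codingAverage_biInter_shiftMap_iterate_le (hT : MeasurePreserving T μ μ)
    (hA : MeasurableSet A) (k d : ℕ) (hd : 0 < d) (N : ℕ) :
    codingAverage μ T A N (⋂ i ∈ range (k + 1), shiftMap^[i * d] ⁻¹' {y | y 0 = true})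
      ≤ ⨆ n : ℕ+, μ (⋂ i ∈ range (k + 1), T^[i * (n : ℕ)] ⁻¹' A) := by
  refine uniformMixture_apply_le (nonempty_divisors_factorial_pow N) fun n hn => ?_
  have hmeas : ∀ m : ℕ, MeasurableSet (⋂ i ∈ range (k + 1), T^[i * m] ⁻¹' A) := fun m =>
    .biInter (Set.to_countable _) fun i _ => (hT.measurable.iterate _) hA
  have hB := isClopen_setOf_apply_zero_eq_true.biInter_shiftMap_iterate_preimage k d
  rw [Measure.map_apply (measurable_coding hT.measurable hA _ _) hB.isOpen.measurableSet,
    coding_preimage_biInter_shiftMap_iterate,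
    (hT.iterate _).measure_preimage (hmeas _).nullMeasurableSet]
  exact le_iSup_of_le ⟨n * d, Nat.mul_pos (Nat.pos_of_mem_divisors hn) hd⟩ le_rfl

lemma codingAverage_shiftMap_preimage_cylinder (hT : MeasurePreserving T μ μ)
    (hA : MeasurableSet A) {s : Finset ℤ} {S : Set (s → Bool)} (hS : MeasurableSet S) {N : ℕ}
    (hN : ∀ i ∈ s, -(N : ℤ) ≤ i) :
    codingAverage μ T A N (shiftMap ⁻¹' cylinder s S) = codingAverage μ T A N (cylinder s S) := by
  simp only [codingAverage, uniformMixture_apply]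
  refine congrArg _ (sum_congr rfl fun n hn => ?_)
  have hnQ : (n : ℤ) ≤ N ! ^ N := by exact_mod_cast Nat.divisor_le hn
  rw [Measure.map_apply (measurable_coding hT.measurable hA _ _)
      (continuous_shiftMap.measurable (hS.cylinder s)),
    Measure.map_apply (measurable_coding hT.measurable hA _ _) (hS.cylinder s),
    measure_coding_preimage_shiftMap_cylinder hT hA (fun i hi => ?_) hS]
  have := hN i hi
  push_cast
  nlinarith

lemma tendsto_codingAverage_shiftMap_sub (hT : MeasurePreserving T μ μ) (hA : MeasurableSet A)
    {C : Set (ℤ → Bool)} (hC : C ∈ measurableCylinders fun _ : ℤ => Bool) :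
    Tendsto (fun N => (codingAverage μ T A N).real (shiftMap ⁻¹' C)
      - (codingAverage μ T A N).real C) atTop (𝓝 0) := by
  obtain ⟨s, S, hS, rfl⟩ := (mem_measurableCylinders C).1 hC
  refine tendsto_const_nhds.congr' ?_
  filter_upwards [eventually_ge_atTop (s.sup fun i => (-i).toNat)] with N hN
  rw [eq_comm, sub_eq_zero, measureReal_def, measureReal_def,
    codingAverage_shiftMap_preimage_cylinder hT hA hS fun i hi => ?_]
  have := (le_sup (f := fun i => (-i).toNat) hi).trans hN
  omega

lemma abs_codingAverage_dilMap_sub_le [IsProbabilityMeasure μ] (hT : Measurable T)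
    (hA : MeasurableSet A) {p : ℕ} (hp : p.Prime) {N : ℕ} (hpN : p ≤ N) {C : Set (ℤ → Bool)}
    (hC : MeasurableSet C) :
    |(codingAverage μ T A N).real (dilMap p ⁻¹' C) - (codingAverage μ T A N).real C|
      ≤ 1 / (N + 1) := by
  simp only [codingAverage, measureReal_uniformMixture]
  set Q := N ! ^ N
  have hQ : Q ≠ 0 := pow_ne_zero _ N.factorial_ne_zero
  have hpQ : p ∣ Q := dvd_pow (Nat.dvd_factorial hp.pos hpN) (by have := hp.pos; omega)
  set g : ℕ → ℝ := fun n => μ.real (coding T A n (N * Q) ⁻¹' C)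
  have hdil : ∀ n, (μ.map (coding T A n (N * Q))).real (dilMap p ⁻¹' C) = g (n * p) := fun n => by
    rw [map_measureReal_apply (measurable_coding hT hA _ _)
      ((continuous_dilMap p).measurable hC)]
    congr 1
    ext x
    simp only [Set.mem_preimage, dilMap_coding]
  have hid : ∀ n, (μ.map (coding T A n (N * Q))).real C = g n := fun n =>
    map_measureReal_apply (measurable_coding hT hA _ _) hC
  have hD : (0 : ℝ) < #Q.divisors := by exact_mod_cast (Nat.nonempty_divisors.2 hQ).card_pos
  simp only [hdil, hid, ← mul_sub, abs_mul]
  rw [abs_of_pos (inv_pos.2 hD), inv_mul_le_iff₀ hD, mul_one_div, le_div_iff₀ (by positivity)]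
  calc |∑ n ∈ Q.divisors, g (n * p) - ∑ n ∈ Q.divisors, g n| * (N + 1)
      ≤ |∑ n ∈ Q.divisors, g (n * p) - ∑ n ∈ Q.divisors, g n| * (Q.factorization p + 1) := by
        gcongr
        exact_mod_cast le_factorization_factorial_pow hp hpN
    _ ≤ #Q.divisors := abs_sum_divisors_mul_prime_sub_le hp hQ hpQ (fun _ => measureReal_nonneg)
        fun _ => measureReal_le_one

lemma tendsto_codingAverage_dilMap_sub [IsProbabilityMeasure μ] (hT : Measurable T)
    (hA : MeasurableSet A) {p : ℕ} (hp : p.Prime) {C : Set (ℤ → Bool)} (hC : MeasurableSet C) :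
    Tendsto (fun N => (codingAverage μ T A N).real (dilMap p ⁻¹' C)
      - (codingAverage μ T A N).real C) atTop (𝓝 0) := by
  refine squeeze_zero_norm' ?_ tendsto_one_div_add_atTop_nhds_zero_nat
  filter_upwards [eventually_ge_atTop p] with N hN
  exact abs_codingAverage_dilMap_sub_le hT hA hp hN hC

end CodingAverage

/-- Every (not necessarily invertible) measure preserving probability system `(X, μ, T)`
and measurable set `A` is majorized by an invertible strongly stationary system — which
may be taken to be the shift on `{0,1}^ℤ` with a strongly stationary measure `ν` — with a
set `B` satisfying `μ A = ν B` and, for every `k`,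
`sup_{n ≥ 1} μ (⋂_{i=0}^k T^{-in} A) ≥ sup_{n ≥ 1} ν (⋂_{i=0}^k S^{-in} B)`. -/
theorem majorizes_strongly_stationary_system
    {X : Type*} [MeasurableSpace X] (μ : Measure X) [IsProbabilityMeasure μ]
    {T : X → X} (hT : MeasurePreserving T μ μ) {A : Set X} (hA : MeasurableSet A) :
    ∃ ν : Measure (ℤ → Bool), IsProbabilityMeasure ν ∧ IsStronglyStationary ν ∧
      ∃ B : Set (ℤ → Bool), MeasurableSet B ∧ μ A = ν B ∧
        ∀ k : ℕ,
          (⨆ n : ℕ+, μ (⋂ i ∈ Finset.range (k + 1), T^[i * (n : ℕ)] ⁻¹' A))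
            ≥ ⨆ n : ℕ+, ν (⋂ i ∈ Finset.range (k + 1), shiftMap^[i * (n : ℕ)] ⁻¹' B) := by
  let νs : ℕ → ProbabilityMeasure (ℤ → Bool) := fun N =>
    ⟨codingAverage μ T A N, isProbabilityMeasure_codingAverage hT.measurable hA N⟩
  let U : Ultrafilter ℕ := .of atTop
  obtain ⟨ν, -, hν⟩ := isCompact_univ.ultrafilter_le_nhds (U.map νs) (by simp)
  replace hν : Tendsto νs U (𝓝 ν) := hν
  have hU : (U : Filter ℕ) ≤ atTop := Ultrafilter.of_le atTop
  have hstat : IsStronglyStationary (ν : Measure (ℤ → Bool)) :=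
    .of_prime (ProbabilityMeasure.measurePreserving_of_tendsto hν continuous_shiftMap
        fun C hC => (tendsto_codingAverage_shiftMap_sub hT hA hC).mono_left hU)
      fun p hp => ProbabilityMeasure.measurePreserving_of_tendsto hν (continuous_dilMap p)
        fun C hC => (tendsto_codingAverage_dilMap_sub hT.measurable hA hp
          (MeasurableSet.of_mem_measurableCylinders hC)).mono_left hU
  have hB := isClopen_setOf_apply_zero_eq_true
  refine ⟨ν, inferInstance, hstat, _, hB.isOpen.measurableSet, ?_, fun k => iSup_le fun d => ?_⟩
  · exact tendsto_nhds_unique (tendsto_const_nhds.congr fun N =>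
      (codingAverage_apply_setOf_zero hT hA N).symm)
      (ProbabilityMeasure.tendsto_measure_of_isClopen_of_tendsto' hν hB)
  · exact le_of_tendsto' (ProbabilityMeasure.tendsto_measure_of_isClopen_of_tendsto' hν
      (hB.biInter_shiftMap_iterate_preimage k d))
      fun N => codingAverage_biInter_shiftMap_iterate_le hT hA k d d.pos N

end
end

section
/- Let (X,𝓑,μ,T) be an extremal strongly stationary system with associated measure preserving maps {τ_n}_{n∈ℕ} satisfying τ_n T = T^n τ_n a.e. and τ_{mn} = τ_m τ_n. If A is a T-invariant set with μ(A) > 0, then the set ⋃_{n∈ℕ} τ_n^{-1}(A) has full measure. -/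
open MeasureTheory Filter

noncomputable section

variable {X : Type*} [MeasurableSpace X]

/-- The `i`-th iterate (for `i : ℤ`) of an invertible map, given by the map `T` and
its inverse `T'`. -/
def zIter (T T' : X → X) (i : ℤ) : X → X :=
  if 0 ≤ i then T^[i.toNat] else T'^[(-i).toNat]

/-- `𝓕` is an algebra of bounded measurable complex valued functions. -/
def IsFunAlg (𝓕 : Set (X → ℂ)) : Prop :=
  (∀ f ∈ 𝓕, Measurable f ∧ ∃ C : ℝ, ∀ x, ‖f x‖ ≤ C) ∧
  (∀ f ∈ 𝓕, ∀ g ∈ 𝓕, f + g ∈ 𝓕 ∧ f * g ∈ 𝓕) ∧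
  (∀ c : ℂ, ∀ f ∈ 𝓕, c • f ∈ 𝓕) ∧ ((fun _ => (1 : ℂ)) ∈ 𝓕) ∧
  (∀ f ∈ 𝓕, (fun x => starRingEnd ℂ (f x)) ∈ 𝓕)

/-- The σ-algebra `⋁_{i ∈ ℤ} T^i 𝓑(𝓕)` spanned by the functions `f ∘ T^i`, `f ∈ 𝓕`, `i ∈ ℤ`
(`T` invertible with inverse `T'`). -/
def genSigma (T T' : X → X) (𝓕 : Set (X → ℂ)) : MeasurableSpace X :=
  MeasurableSpace.generateFrom
    {s | ∃ f ∈ 𝓕, ∃ i : ℤ, ∃ U : Set ℂ, IsOpen U ∧ s = (fun x => f (zIter T T' i x)) ⁻¹' U}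

/-- `𝓕` is `T`-generating: `⋁_{i ∈ ℤ} T^i 𝓑(𝓕) = 𝓑` up to `μ`-null sets. -/
def IsGenerating (μ : Measure X) (T T' : X → X) (𝓕 : Set (X → ℂ)) : Prop :=
  ∀ s : Set X, MeasurableSet s →
    ∃ t : Set X, MeasurableSet[genSigma T T' 𝓕] t ∧ μ (symmDiff s t) = 0

/-- The strong stationarity identity:
`∫ f₀ · (f₁ ∘ T) ⋯ (f_k ∘ T^k) dμ = ∫ f₀ · (f₁ ∘ T^n) ⋯ (f_k ∘ T^{kn}) dμ`
for all `k, n ∈ ℕ`, `n ≥ 1`, and `f₀, …, f_k ∈ 𝓕`. -/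
def SSIdentity (μ : Measure X) (T : X → X) (𝓕 : Set (X → ℂ)) : Prop :=
  ∀ k n : ℕ, 0 < n → ∀ f : ℕ → X → ℂ, (∀ i ≤ k, f i ∈ 𝓕) →
    ∫ x, ∏ i ∈ Finset.range (k + 1), f i (T^[i] x) ∂μ =
    ∫ x, ∏ i ∈ Finset.range (k + 1), f i (T^[i * n] x) ∂μ

/-- A strongly stationary system: an invertible measure preserving system `(X, 𝓑, μ, T)`
(with inverse `T'`) together with a `T`-generating function algebra `𝓕` satisfying the
strong stationarity identity. -/
structure SSSystem (μ : Measure X) (T T' : X → X) (𝓕 : Set (X → ℂ)) : Prop where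
  (measurable_T : Measurable T)
  (measurable_T' : Measurable T')
  (measurePreserving : MeasurePreserving T μ μ)
  (leftInv : Function.LeftInverse T' T)
  (rightInv : Function.RightInverse T' T)
  (funAlg : IsFunAlg 𝓕)
  (generating : IsGenerating μ T T' 𝓕)
  (ssIdentity : SSIdentity μ T 𝓕)

/-- `ν` is the (two-sided) Bernoulli product measure on `Λ^ℤ` with marginal `ρ`. -/
def IsBernoulliMeasure {Λ : Type*} [MeasurableSpace Λ] (ρ : Measure Λ)
    (ν : Measure (ℤ → Λ)) : Prop :=
  ∀ (s : Finset ℤ) (A : ℤ → Set Λ), (∀ i, MeasurableSet (A i)) →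
    ν {x : ℤ → Λ | ∀ i ∈ s, x i ∈ A i} = ∏ i ∈ s, ρ (A i)

/-- Measure-theoretic isomorphism (mod 0) of measure preserving systems. -/
def IsMPIso {Y : Type*} [MeasurableSpace Y] (μ : Measure X) (T : X → X)
    (ν : Measure Y) (R : Y → Y) : Prop :=
  ∃ (φ : X → Y) (ψ : Y → X), MeasurePreserving φ μ ν ∧ MeasurePreserving ψ ν μ ∧
    (∀ᵐ x ∂μ, ψ (φ x) = x) ∧ (∀ᵐ y ∂ν, φ (ψ y) = y) ∧
    (∀ᵐ x ∂μ, φ (T x) = R (φ x))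

/-- Data of a two-sided Bernoulli shift: a state space `Λ`, a marginal probability `ρ`
and the corresponding product measure `bμ` on `Λ^ℤ`. -/
structure BernoulliShiftData where
  (Λ : Type)
  [mΛ : MeasurableSpace Λ]
  (ρ : Measure Λ)
  (bμ : Measure (ℤ → Λ))

attribute [instance] BernoulliShiftData.mΛ

/-- `(μ, T)` is (isomorphic to) a two-sided Bernoulli shift. -/
def IsBernoulliSystem (μ : Measure X) (T : X → X) : Prop :=
  ∃ B : BernoulliShiftData, IsProbabilityMeasure B.ρ ∧ IsProbabilityMeasure B.bμ ∧
    IsBernoulliMeasure B.ρ B.bμ ∧ IsMPIso μ T B.bμ shiftMap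

end

/-!
The union `B = ⋃ₙ τₙ⁻¹ A` is `τ`-invariant because `τ_{nm} = τ_n ∘ τ_m`, so by extremality it
suffices to show `μ (T⁻¹ B \ B) = 0`. Conjugating by `τ_m` shows that this defect equals
`μ (T^{-m} B \ B)` for every `m ≥ 1`. Each `τₙ⁻¹ A` is `Tⁿ`-invariant, so the partial union over
`n ≤ r` is `T^{r!}`-invariant, and the defect at `m = r!` is at most the measure of the remaining
part of `B`, which tends to `0`.
-/

open Set Function

open scoped Nat Topology

namespace MeasureTheory

variable {X : Type*} [MeasurableSpace X] {μ : Measure X}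

theorem preimage_ae_eq_of_ae_semiconj {f g h : X → X} {s : Set X}
    (hf : Measure.QuasiMeasurePreserving f μ μ) (hfgh : ∀ᵐ x ∂μ, g (f x) = f (h x))
    (hs : g ⁻¹' s =ᵐ[μ] s) : h ⁻¹' (f ⁻¹' s) =ᵐ[μ] f ⁻¹' s :=
  (EventuallyEq.preimage hfgh s).symm.trans (hf.preimage_ae_eq hs)

theorem measure_preimage_diff_eq_of_ae_semiconj {f g h : X → X} {s : Set X}
    (hf : MeasurePreserving f μ μ) (hh : Measure.QuasiMeasurePreserving h μ μ)
    (hfgh : ∀ᵐ x ∂μ, g (f x) = f (h x)) (hfs : f ⁻¹' s =ᵐ[μ] s)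
    (hgs : NullMeasurableSet (g ⁻¹' s \ s) μ) :
    μ (g ⁻¹' s \ s) = μ (h ⁻¹' s \ s) := by
  have hfgs : f ⁻¹' (g ⁻¹' s) =ᵐ[μ] h ⁻¹' s :=
    (EventuallyEq.preimage hfgh s).trans (hh.preimage_ae_eq hfs)
  rw [← hf.measure_preimage hgs, preimage_sdiff]
  exact measure_congr (hfgs.diff hfs)

theorem MeasurePreserving.preimage_ae_eq_of_ae_subset [IsFiniteMeasure μ] {f : X → X}
    {s : Set X} (hf : MeasurePreserving f μ μ) (hs : NullMeasurableSet s μ)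
    (hfs : f ⁻¹' s ≤ᵐ[μ] s) : f ⁻¹' s =ᵐ[μ] s :=
  ae_eq_of_ae_subset_of_measure_ge hfs (hf.measure_preimage hs).ge
    (hs.preimage hf.quasiMeasurePreserving) (measure_ne_top μ s)

theorem MeasurePreserving.measure_preimage_diff_le {f : X → X} {s t : Set X}
    (hf : MeasurePreserving f μ μ) (hst : s ⊆ t) (hfs : f ⁻¹' s =ᵐ[μ] s) :
    μ (f ⁻¹' t \ t) ≤ μ (t \ s) := by
  have hcover : f ⁻¹' t \ t ⊆ f ⁻¹' (t \ s) ∪ (f ⁻¹' s \ s) := fun x hx ↦ by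
    by_cases hxs : f x ∈ s
    · exact Or.inr ⟨hxs, fun h ↦ hx.2 (hst h)⟩
    · exact Or.inl ⟨hx.1, hxs⟩
  calc μ (f ⁻¹' t \ t) ≤ μ (f ⁻¹' (t \ s)) + μ (f ⁻¹' s \ s) :=
        (measure_mono hcover).trans (measure_union_le _ _)
    _ ≤ μ (t \ s) := by rw [(ae_eq_set.mp hfs).1, add_zero]; exact hf.measure_preimage_le _

theorem tendsto_measure_preimage_iterate_factorial_diff [IsFiniteMeasure μ] {f : X → X}
    (hf : MeasurePreserving f μ μ) {s : ℕ → Set X} (hs : ∀ n, 0 < n → NullMeasurableSet (s n) μ)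
    (hinv : ∀ n, 0 < n → f^[n] ⁻¹' s n =ᵐ[μ] s n) :
    Tendsto (fun r ↦ μ (f^[r !] ⁻¹' (⋃ (n) (_ : 0 < n), s n) \ ⋃ (n) (_ : 0 < n), s n))
      atTop (𝓝 0) := by
  set t : ℕ → Set X := fun n ↦ ⋃ (_ : 0 < n), s n
  have ht : ∀ n r, n ≤ r → f^[r !] ⁻¹' t n =ᵐ[μ] t n := by
    intro n r hnr
    rcases n.eq_zero_or_pos with rfl | hn
    · simp [t]
    obtain ⟨k, hk⟩ := Nat.dvd_factorial hn hnr
    simp only [t, hn, iUnion_true, hk, iterate_mul]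
    exact (hf.iterate n).quasiMeasurePreserving.preimage_iterate_ae_eq k (hinv n hn)
  have hacc : ∀ r, f^[r !] ⁻¹' accumulate t r =ᵐ[μ] accumulate t r := fun r ↦ by
    simp only [accumulate_def, preimage_iUnion₂]
    exact .countable_iUnion fun n ↦ .countable_iUnion fun hnr ↦ ht n r hnr
  have hmeas : ∀ r, NullMeasurableSet (accumulate t r) μ := fun r ↦
    .iUnion fun n ↦ .iUnion fun _ ↦ .iUnion fun hn ↦ hs n hn
  have hrest : Tendsto (fun r ↦ μ ((⋃ n, t n) \ accumulate t r)) atTop (𝓝 0) := by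
    have := tendsto_measure_iInter_atTop (μ := μ)
      (fun r ↦ (NullMeasurableSet.iUnion fun n ↦ .iUnion fun hn ↦ hs n hn).diff (hmeas r))
      (fun r r' hrr' ↦ sdiff_subset_sdiff_right (monotone_accumulate hrr'))
      ⟨0, measure_ne_top μ _⟩
    rwa [← sdiff_iUnion, iUnion_accumulate, sdiff_self, measure_empty] at this
  refine tendsto_of_tendsto_of_tendsto_of_le_of_le tendsto_const_nhds hrest (fun _ ↦ bot_le)
    fun r ↦ (hf.iterate _).measure_preimage_diff_le (accumulate_subset_iUnion r) (hacc r)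

end MeasureTheory

theorem extremal_union_tau_preimages_full_general
    {X : Type*} [MeasurableSpace X] (μ : Measure X) [IsProbabilityMeasure μ]
    (T T' : X → X) (𝓕 : Set (X → ℂ)) (hss : SSSystem μ T T' 𝓕)
    (τ : ℕ → X → X)
    (hτmp : ∀ n : ℕ, 0 < n → MeasurePreserving (τ n) μ μ)
    (hτcomm : ∀ n : ℕ, 0 < n → ∀ᵐ x ∂μ, T (τ n x) = τ n (T^[n] x))
    (hτmul : ∀ m n : ℕ, 0 < m → 0 < n → τ (m * n) = τ m ∘ τ n)
    (hext : ∀ B : Set X, MeasurableSet B → μ (symmDiff (T ⁻¹' B) B) = 0 →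
      (∀ n : ℕ, 0 < n → μ (symmDiff (τ n ⁻¹' B) B) = 0) → μ B = 0 ∨ μ B = 1)
    (A : Set X) (hA : MeasurableSet A)
    (hinv : μ (symmDiff (T ⁻¹' A) A) = 0) (hpos : 0 < μ A) :
    μ (⋃ (n : ℕ) (_ : 0 < n), τ n ⁻¹' A) = 1 := by
  have hT : MeasurePreserving T μ μ := hss.measurePreserving
  set B := ⋃ (n : ℕ) (_ : 0 < n), τ n ⁻¹' A
  have hB : MeasurableSet B := .iUnion fun n ↦ .iUnion fun hn ↦ (hτmp n hn).measurable hA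
  have hτB : ∀ m, 0 < m → τ m ⁻¹' B =ᵐ[μ] B := by
    refine fun m hm ↦ (hτmp m hm).preimage_ae_eq_of_ae_subset hB.nullMeasurableSet
      (LE.le.eventuallyLE fun x hx ↦ ?_)
    obtain ⟨n, hn, hxn⟩ := mem_iUnion₂.mp hx
    exact mem_iUnion₂.mpr ⟨n * m, Nat.mul_pos hn hm, by rwa [hτmul n m hn hm]⟩
  have hdefect : μ (T ⁻¹' B \ B) = 0 := by
    have hconst : ∀ r, μ (T ⁻¹' B \ B) = μ (T^[r !] ⁻¹' B \ B) := fun r ↦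
      measure_preimage_diff_eq_of_ae_semiconj (hτmp _ r.factorial_pos)
        (hT.iterate _).quasiMeasurePreserving (hτcomm _ r.factorial_pos) (hτB _ r.factorial_pos)
        ((hT.measurable hB).diff hB).nullMeasurableSet
    have hτA : ∀ n, 0 < n → T^[n] ⁻¹' (τ n ⁻¹' A) =ᵐ[μ] τ n ⁻¹' A := fun n hn ↦
      preimage_ae_eq_of_ae_semiconj (hτmp n hn).quasiMeasurePreserving (hτcomm n hn)
        (measure_symmDiff_eq_zero_iff.mp hinv)
    exact tendsto_nhds_unique (tendsto_const_nhds.congr hconst)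
      (tendsto_measure_preimage_iterate_factorial_diff hT
        (fun n hn ↦ ((hτmp n hn).measurable hA).nullMeasurableSet) hτA)
  have hTB : T ⁻¹' B =ᵐ[μ] B :=
    hT.preimage_ae_eq_of_ae_subset hB.nullMeasurableSet (ae_le_set.mpr hdefect)
  have hAB : μ A ≤ μ B := (hτmp 1 one_pos).measure_preimage hA.nullMeasurableSet ▸
    measure_mono (subset_iUnion₂ (s := fun n (_ : 0 < n) ↦ τ n ⁻¹' A) 1 one_pos)
  exact (hext B hB (measure_symmDiff_eq_zero_iff.mpr hTB)
    fun m hm ↦ measure_symmDiff_eq_zero_iff.mpr (hτB m hm)).resolve_left (hpos.trans_le hAB).ne'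

/-- Let `(X, 𝓑, μ, T)` be an *extremal* strongly stationary system (the joint action of
`T` and the Jenvey maps `τ_n` is ergodic), with `τ_n` measure preserving, fixing `𝓕`,
satisfying `T ∘ τ_n = τ_n ∘ T^n` a.e. and `τ_{mn} = τ_m ∘ τ_n`. If `A` is a `T`-invariant
set (mod `μ`) of positive measure, then `⋃_{n ≥ 1} τ_n⁻¹ A` has full measure. -/
theorem extremal_union_tau_preimages_full
    {X : Type*} [MeasurableSpace X] (μ : Measure X) [IsProbabilityMeasure μ]
    (T T' : X → X) (𝓕 : Set (X → ℂ)) (hss : SSSystem μ T T' 𝓕)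
    (τ : ℕ → X → X)
    (hτmp : ∀ n : ℕ, 0 < n → MeasurePreserving (τ n) μ μ)
    (hτfix : ∀ n : ℕ, 0 < n → ∀ f ∈ 𝓕, ∀ᵐ x ∂μ, f (τ n x) = f x)
    (hτcomm : ∀ n : ℕ, 0 < n → ∀ᵐ x ∂μ, T (τ n x) = τ n (T^[n] x))
    (hτmul : ∀ m n : ℕ, 0 < m → 0 < n → τ (m * n) = τ m ∘ τ n)
    (hext : ∀ B : Set X, MeasurableSet B → μ (symmDiff (T ⁻¹' B) B) = 0 →
      (∀ n : ℕ, 0 < n → μ (symmDiff (τ n ⁻¹' B) B) = 0) → μ B = 0 ∨ μ B = 1)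
    (A : Set X) (hA : MeasurableSet A)
    (hinv : μ (symmDiff (T ⁻¹' A) A) = 0) (hpos : 0 < μ A) :
    μ (⋃ (n : ℕ) (_ : 0 < n), τ n ⁻¹' A) = 1 :=
  extremal_union_tau_preimages_full_general μ T T' 𝓕 hss τ hτmp hτcomm hτmul hext A hA hinv hpos
end
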